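/- Let L₁, L₂ be complete atomistic ortho-lattices realized as Lᵢ = {a ⊆ Σᵢ : a^{⊥ᵢ⊥ᵢ} = a}, and let L be a complete atomistic ortho-lattice on Σ = Σ₁×Σ₂ with orthocomplementation induced by an orthogonality relation ⊥ on Σ. Suppose L satisfies P2, P3, and P4 with W₁, W₂ transitive. Then for any two distinct points p ≠ q of Σ, p^{#⊥} ∩ q^{#⊥} = ∅, where p^# = (p₁^{⊥₁}×Σ₂) ∪ (Σ₁×p₂^{⊥₂}). -/
import Mathlib


open Set

/-- For a binary relation `R` on `α` and `a ⊆ α`, the set `a^⊥ = {q : q ⊥ p for all p ∈ a}`. -/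
def pol {α : Type*} (R : α → α → Prop) (a : Set α) : Set α := {q | ∀ p ∈ a, R q p}

/-- An orthogonality relation: anti-reflexive, symmetric, singletons biorthogonally closed. -/
def IsOrthRel {α : Type*} (R : α → α → Prop) : Prop :=
  (∀ p, ¬ R p p) ∧ (∀ p q, R p q → R q p) ∧ ∀ p : α, pol R (pol R {p}) = {p}

/-- A p-lattice on `α`: contains `∅`, `univ`, all singletons, closed under arbitrary
intersections. -/
def IsPLattice {α : Type*} (L : Set (Set α)) : Prop :=
  ∅ ∈ L ∧ Set.univ ∈ L ∧ (∀ S ⊆ L, ⋂₀ S ∈ L) ∧ ∀ p : α, {p} ∈ L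

/-- The join (closure) of a subset `s` in a p-lattice `L`: the intersection of all members of
`L` containing `s`. -/
def cl {α : Type*} (L : Set (Set α)) (s : Set α) : Set α := ⋂₀ {c ∈ L | s ⊆ c}

/-- The separated-product relation `#` on `α × β`: `p # q ↔ p₁ ⊥₁ q₁ or p₂ ⊥₂ q₂`. -/
def sharp {α β : Type*} (R1 : α → α → Prop) (R2 : β → β → Prop) :
    α × β → α × β → Prop := fun p q => R1 p.1 q.1 ∨ R2 p.2 q.2

/-- An automorphism of a p-lattice `L`: a bijection preserving `L` both ways. -/
def IsAuto {α : Type*} (L : Set (Set α)) (u : Equiv α α) : Prop :=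
  ∀ a : Set α, a ∈ L ↔ u '' a ∈ L

section Aux

variable {α : Type*} {R : α → α → Prop}

theorem pol_anti {a b : Set α} (h : a ⊆ b) : pol R b ⊆ pol R a :=
  fun _ hq p hp => hq p (h hp)

theorem subset_polpol (hsym : ∀ p q, R p q → R q p) (a : Set α) :
    a ⊆ pol R (pol R a) := fun p hp q hq => hsym q p (hq p hp)

theorem pol_pol_pol (hsym : ∀ p q, R p q → R q p) (a : Set α) :
    pol R (pol R (pol R a)) = pol R a :=
  Subset.antisymm (pol_anti (subset_polpol hsym a)) (subset_polpol hsym (pol R a))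

theorem pol_empty : pol R (∅ : Set α) = univ := by
  ext q; simp [pol]

theorem pol_union (a b : Set α) : pol R (a ∪ b) = pol R a ∩ pol R b := by
  ext q
  constructor
  · intro h
    exact ⟨fun p hp => h p (Or.inl hp), fun p hp => h p (Or.inr hp)⟩
  · rintro ⟨ha, hb⟩ p (hp | hp)
    exacts [ha p hp, hb p hp]

theorem polpol_sInter (hsym : ∀ p q, R p q → R q p) {S : Set (Set α)}
    (h : ∀ s ∈ S, pol R (pol R s) = s) :
    pol R (pol R (⋂₀ S)) = ⋂₀ S := by
  refine Subset.antisymm (fun x hx => mem_sInter.2 fun s hs => ?_) (subset_polpol hsym _)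
  have hsub : pol R (pol R (⋂₀ S)) ⊆ pol R (pol R s) :=
    pol_anti (pol_anti (sInter_subset_of_mem hs))
  exact (h s hs) ▸ hsub hx

end Aux

/-- Cylinder lemma, first coordinate: any `c ∈ L` containing `b1 × Σ₂` contains
`b1^{⊥⊥} × Σ₂`. -/
theorem cyl1 {σ1 σ2 : Type*} (R1 : σ1 → σ1 → Prop) (R : σ1 × σ2 → σ1 × σ2 → Prop)
    (hRsym : ∀ p q, R p q → R q p)
    (L1 : Set (Set σ1)) (L : Set (Set (σ1 × σ2)))
    (hL1 : L1 = {a | pol R1 (pol R1 a) = a})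
    (hL : L = {a | pol R (pol R a) = a})
    (hP3 : ∀ a1 : Set σ1, a1 ×ˢ (univ : Set σ2) ∈ L → a1 ∈ L1)
    (W1 : Set (Equiv σ1 σ1)) (W2 : Set (Equiv σ2 σ2))
    (hW1auto : ∀ u ∈ W1, IsAuto L1 u)
    (hW1ne : W1.Nonempty)
    (hW2tr : ∀ p q : σ2, ∃ u ∈ W2, u p = q)
    (hP4 : ∀ a ∈ L, ∀ u1 ∈ W1, ∀ u2 ∈ W2, Prod.map u1 u2 '' a ∈ L)
    (c : Set (σ1 × σ2)) (hc : c ∈ L) (b1 : Set σ1)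
    (hb : b1 ×ˢ (univ : Set σ2) ⊆ c) :
    (pol R1 (pol R1 b1)) ×ˢ (univ : Set σ2) ⊆ c := by
  obtain ⟨w1, hw1⟩ := hW1ne
  set c1 : Set σ1 := {s | ∀ t, (s, t) ∈ c} with hc1def
  have himg : ∀ (u2 : Equiv σ2 σ2) (x : σ1 × σ2),
      x ∈ Prod.map w1 u2 '' c ↔ (w1.symm x.1, u2.symm x.2) ∈ c := by
    intro u2 x
    constructor
    · rintro ⟨y, hy, rfl⟩
      simpa using hy
    · intro h
      exact ⟨(w1.symm x.1, u2.symm x.2), h, by simp [Prod.map]⟩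
  have hF : (⋂₀ {d | ∃ u2 ∈ W2, d = Prod.map w1 u2 '' c}) ∈ L := by
    rw [hL]
    refine polpol_sInter hRsym ?_
    rintro d ⟨u2, hu2, rfl⟩
    have h4 := hP4 c hc w1 hw1 u2 hu2
    rwa [hL] at h4
  have hFeq : (⋂₀ {d | ∃ u2 ∈ W2, d = Prod.map w1 u2 '' c})
      = (⇑w1 '' c1) ×ˢ (univ : Set σ2) := by
    ext x
    simp only [mem_sInter, mem_setOf_eq, mem_prod, mem_univ, and_true]
    constructor
    · intro h
      refine ⟨w1.symm x.1, fun t => ?_, by simp⟩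
      obtain ⟨u2, hu2, hut⟩ := hW2tr t x.2
      have hm := h _ ⟨u2, hu2, rfl⟩
      rw [himg u2 x] at hm
      rwa [← hut, Equiv.symm_apply_apply] at hm
    · rintro ⟨s, hs, hsx⟩
      rintro d ⟨u2, hu2, rfl⟩
      rw [himg u2 x]
      have hws : w1.symm x.1 = s := by rw [← hsx]; simp
      rw [hws]
      exact hs _
  have hc1L : c1 ∈ L1 := by
    have hm : (⇑w1 '' c1) ∈ L1 := hP3 _ (hFeq ▸ hF)
    exact ((hW1auto w1 hw1) c1).mpr hm
  have hb1c1 : b1 ⊆ c1 := fun s hs t => hb (mk_mem_prod hs (mem_univ t))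
  rintro ⟨s, t⟩ ⟨hs, -⟩
  have hsc1 : s ∈ c1 := by
    have hcc : pol R1 (pol R1 c1) = c1 := by rwa [hL1] at hc1L
    exact hcc ▸ (pol_anti (pol_anti hb1c1)) hs
  exact hsc1 t

/-- Cylinder lemma, second coordinate. -/
theorem cyl2 {σ1 σ2 : Type*} (R2 : σ2 → σ2 → Prop) (R : σ1 × σ2 → σ1 × σ2 → Prop)
    (hRsym : ∀ p q, R p q → R q p)
    (L2 : Set (Set σ2)) (L : Set (Set (σ1 × σ2)))
    (hL2 : L2 = {a | pol R2 (pol R2 a) = a})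
    (hL : L = {a | pol R (pol R a) = a})
    (hP3 : ∀ a2 : Set σ2, (univ : Set σ1) ×ˢ a2 ∈ L → a2 ∈ L2)
    (W1 : Set (Equiv σ1 σ1)) (W2 : Set (Equiv σ2 σ2))
    (hW2auto : ∀ u ∈ W2, IsAuto L2 u)
    (hW2ne : W2.Nonempty)
    (hW1tr : ∀ p q : σ1, ∃ u ∈ W1, u p = q)
    (hP4 : ∀ a ∈ L, ∀ u1 ∈ W1, ∀ u2 ∈ W2, Prod.map u1 u2 '' a ∈ L)
    (c : Set (σ1 × σ2)) (hc : c ∈ L) (b2 : Set σ2)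
    (hb : (univ : Set σ1) ×ˢ b2 ⊆ c) :
    (univ : Set σ1) ×ˢ (pol R2 (pol R2 b2)) ⊆ c := by
  obtain ⟨w2, hw2⟩ := hW2ne
  set c2 : Set σ2 := {t | ∀ s, (s, t) ∈ c} with hc2def
  have himg : ∀ (u1 : Equiv σ1 σ1) (x : σ1 × σ2),
      x ∈ Prod.map u1 w2 '' c ↔ (u1.symm x.1, w2.symm x.2) ∈ c := by
    intro u1 x
    constructor
    · rintro ⟨y, hy, rfl⟩
      simpa using hy
    · intro h
      exact ⟨(u1.symm x.1, w2.symm x.2), h, by simp [Prod.map]⟩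
  have hF : (⋂₀ {d | ∃ u1 ∈ W1, d = Prod.map u1 w2 '' c}) ∈ L := by
    rw [hL]
    refine polpol_sInter hRsym ?_
    rintro d ⟨u1, hu1, rfl⟩
    have h4 := hP4 c hc u1 hu1 w2 hw2
    rwa [hL] at h4
  have hFeq : (⋂₀ {d | ∃ u1 ∈ W1, d = Prod.map u1 w2 '' c})
      = (univ : Set σ1) ×ˢ (⇑w2 '' c2) := by
    ext x
    simp only [mem_sInter, mem_setOf_eq, mem_prod, mem_univ, true_and]
    constructor
    · intro h
      refine ⟨w2.symm x.2, fun s => ?_, by simp⟩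
      obtain ⟨u1, hu1, hus⟩ := hW1tr s x.1
      have hm := h _ ⟨u1, hu1, rfl⟩
      rw [himg u1 x] at hm
      rwa [← hus, Equiv.symm_apply_apply] at hm
    · rintro ⟨t, ht, htx⟩
      rintro d ⟨u1, hu1, rfl⟩
      rw [himg u1 x]
      have hwt : w2.symm x.2 = t := by rw [← htx]; simp
      rw [hwt]
      exact ht _
  have hc2L : c2 ∈ L2 := by
    have hm : (⇑w2 '' c2) ∈ L2 := hP3 _ (hFeq ▸ hF)
    exact ((hW2auto w2 hw2) c2).mpr hm
  have hb2c2 : b2 ⊆ c2 := fun t ht s => hb (mk_mem_prod (mem_univ s) ht)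
  rintro ⟨s, t⟩ ⟨-, ht⟩
  have htc2 : t ∈ c2 := by
    have hcc : pol R2 (pol R2 c2) = c2 := by rwa [hL2] at hc2L
    exact hcc ▸ (pol_anti (pol_anti hb2c2)) ht
  exact htc2 s

/-- with `Lᵢ` the biorthogonally closed subsets of `Σᵢ` and `L` the
biorthogonally closed subsets for an orthogonality relation `⊥` on `Σ₁ × Σ₂` satisfying
P2, P3 and P4 with transitive `Wᵢ`, for any distinct points `p ≠ q` one has
`p^{#⊥} ∩ q^{#⊥} = ∅`. -/
theorem stmt9 {σ1 σ2 : Type*} (R1 : σ1 → σ1 → Prop) (R2 : σ2 → σ2 → Prop)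
    (R : σ1 × σ2 → σ1 × σ2 → Prop)
    (h1 : IsOrthRel R1) (h2 : IsOrthRel R2) (hR : IsOrthRel R)
    (L1 : Set (Set σ1)) (L2 : Set (Set σ2)) (L : Set (Set (σ1 × σ2)))
    (hL1 : L1 = {a | pol R1 (pol R1 a) = a}) (hL2 : L2 = {a | pol R2 (pol R2 a) = a})
    (hL : L = {a | pol R (pol R a) = a})
    (hP2 : ∀ a1 ∈ L1, ∀ a2 ∈ L2,
      (a1 ×ˢ (univ : Set σ2)) ∪ ((univ : Set σ1) ×ˢ a2) ∈ L)
    (hP3₁ : ∀ a1 : Set σ1, a1 ×ˢ (univ : Set σ2) ∈ L → a1 ∈ L1)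
    (hP3₂ : ∀ a2 : Set σ2, (univ : Set σ1) ×ˢ a2 ∈ L → a2 ∈ L2)
    (W1 : Set (Equiv σ1 σ1)) (W2 : Set (Equiv σ2 σ2))
    (hW1auto : ∀ u ∈ W1, IsAuto L1 u) (hW2auto : ∀ u ∈ W2, IsAuto L2 u)
    (hW1ne : W1.Nonempty) (hW2ne : W2.Nonempty)
    (hW1tr : ∀ p q : σ1, ∃ u ∈ W1, u p = q) (hW2tr : ∀ p q : σ2, ∃ u ∈ W2, u p = q)
    (hP4 : ∀ a ∈ L, ∀ u1 ∈ W1, ∀ u2 ∈ W2, Prod.map u1 u2 '' a ∈ L)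
    (p q : σ1 × σ2) (hpq : p ≠ q) :
    pol R (pol (sharp R1 R2) {p}) ∩ pol R (pol (sharp R1 R2) {q}) = ∅ := by
  have hRirr := hR.1
  have hRsym := hR.2.1
  ext x
  simp only [mem_inter_iff, mem_empty_iff_false, iff_false, not_and]
  intro hx1 hx2
  exfalso
  have hcx : pol R {x} ∈ L := by rw [hL]; exact pol_pol_pol hRsym {x}
  have hxmemp : ∀ y : σ1 × σ2, sharp R1 R2 y p → y ∈ pol R {x} := by
    intro y hy r hr
    rw [mem_singleton_iff] at hr; subst hr
    refine hRsym _ _ (hx1 y fun r' hr' => ?_)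
    rw [mem_singleton_iff] at hr'; subst hr'; exact hy
  have hxmemq : ∀ y : σ1 × σ2, sharp R1 R2 y q → y ∈ pol R {x} := by
    intro y hy r hr
    rw [mem_singleton_iff] at hr; subst hr
    refine hRsym _ _ (hx2 y fun r' hr' => ?_)
    rw [mem_singleton_iff] at hr'; subst hr'; exact hy
  have hne : p.1 ≠ q.1 ∨ p.2 ≠ q.2 := by
    by_contra h
    push_neg at h
    exact hpq (Prod.ext h.1 h.2)
  have hxx : R x x := by
    rcases hne with h | h
    · set b1 : Set σ1 := pol R1 {p.1} ∪ pol R1 {q.1} with hb1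
      have hb : b1 ×ˢ (univ : Set σ2) ⊆ pol R {x} := by
        rintro ⟨s, t⟩ ⟨hs, -⟩
        rcases hs with hs | hs
        · exact hxmemp (s, t) (Or.inl (hs p.1 rfl))
        · exact hxmemq (s, t) (Or.inl (hs q.1 rfl))
      have hkey := cyl1 R1 R hRsym L1 L hL1 hL hP3₁ W1 W2 hW1auto hW1ne hW2tr hP4
        (pol R {x}) hcx b1 hb
      have hpp : pol R1 (pol R1 b1) = univ := by
        have h0 : pol R1 b1 = ∅ := by
          rw [hb1, pol_union, h1.2.2, h1.2.2]
          ext z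
          simp only [mem_inter_iff, mem_singleton_iff, mem_empty_iff_false, iff_false, not_and]
          intro hz1 hz2
          exact h (hz1.symm.trans hz2)
        rw [h0, pol_empty]
      rw [hpp] at hkey
      have hxmem : x ∈ pol R {x} := hkey ⟨trivial, trivial⟩
      exact hxmem x rfl
    · set b2 : Set σ2 := pol R2 {p.2} ∪ pol R2 {q.2} with hb2
      have hb : (univ : Set σ1) ×ˢ b2 ⊆ pol R {x} := by
        rintro ⟨s, t⟩ ⟨-, ht⟩
        rcases ht with ht | ht
        · exact hxmemp (s, t) (Or.inr (ht p.2 rfl))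
        · exact hxmemq (s, t) (Or.inr (ht q.2 rfl))
      have hkey := cyl2 R2 R hRsym L2 L hL2 hL hP3₂ W1 W2 hW2auto hW2ne hW1tr hP4
        (pol R {x}) hcx b2 hb
      have hpp : pol R2 (pol R2 b2) = univ := by
        have h0 : pol R2 b2 = ∅ := by
          rw [hb2, pol_union, h2.2.2, h2.2.2]
          ext z
          simp only [mem_inter_iff, mem_singleton_iff, mem_empty_iff_false, iff_false, not_and]
          intro hz1 hz2
          exact h (hz1.symm.trans hz2)
        rw [h0, pol_empty]
      rw [hpp] at hkey
      have hxmem : x ∈ pol R {x} := hkey ⟨trivial, trivial⟩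
      exact hxmem x rfl
  exact hRirr x hxx
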